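/- Let X be a type, D a probability distribution (PMF) over X, H a finite nonempty set of functions X → X, and ε_0 > 0 such that for all f ≠ g in H, Pr_{x~D}[f(x) ≠ g(x)] > ε_0. Fix f ∈ H, 0 < δ' < 1, and k ∈ ℕ with k ≥ (1/ε_0)·(ln|H| + ln(1/δ')). Then with probability at least 1 − δ' over k independent draws x_1, …, x_k from D, the only g ∈ H satisfying g(x_i) = f(x_i) for all i ∈ {1,…,k} is g = f. -/

import Mathlib

/-!
For `g ≠ f` in `H`, one draw fails to separate `g` from `f` with probability at most
`1 - ε₀ ≤ exp (-ε₀)`, so `k` independent draws all fail with probability at most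
`exp (-ε₀ k)`. A union bound over the fewer than `|H|` such `g` bounds the probability that
some `g ≠ f` stays consistent by `|H| exp (-ε₀ k)`, and the choice of `k` makes this at most `δ'`.
-/

open MeasureTheory
open scoped ENNReal

theorem ENNReal.tsum_fin_pi_prod {X : Type*} (h : X → ℝ≥0∞) :
    ∀ k : ℕ, ∑' v : Fin k → X, ∏ i, h (v i) = (∑' x, h x) ^ k
  | 0 => by simp
  | k + 1 => by
    rw [← (Fin.consEquiv fun _ => X).tsum_eq, ENNReal.tsum_prod', pow_succ',
      ← ENNReal.tsum_fin_pi_prod h k, ← ENNReal.tsum_mul_right]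
    simp [Fin.consEquiv, Fin.prod_univ_succ, ENNReal.tsum_mul_left]

namespace PMF

variable {X : Type*}

noncomputable def iid (D : PMF X) (k : ℕ) : PMF (Fin k → X) :=
  ⟨fun v => ∏ i, D (v i), by
    rw [ENNReal.summable.hasSum_iff, ENNReal.tsum_fin_pi_prod, D.tsum_coe, one_pow]⟩

theorem iid_apply (D : PMF X) (k : ℕ) (v : Fin k → X) : D.iid k v = ∏ i, D (v i) := rfl

theorem toOuterMeasure_add_compl (p : PMF X) (s : Set X) :
    p.toOuterMeasure s + p.toOuterMeasure sᶜ = 1 := by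
  rw [toOuterMeasure_apply, toOuterMeasure_apply, ← ENNReal.tsum_add, ← p.tsum_coe]
  exact tsum_congr fun x => congrFun (s.indicator_self_add_compl p) x

theorem iid_toOuterMeasure_forall_mem (D : PMF X) (k : ℕ) (s : Set X) :
    (D.iid k).toOuterMeasure {v | ∀ i, v i ∈ s} = D.toOuterMeasure s ^ k := by
  rw [toOuterMeasure_apply, toOuterMeasure_apply, ← ENNReal.tsum_fin_pi_prod]
  refine tsum_congr fun v => ?_
  by_cases hv : ∀ i, v i ∈ s
  · simp [Set.indicator_of_mem, hv, iid_apply]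
  · obtain ⟨i, hi⟩ := not_forall.mp hv
    rw [Set.indicator_of_notMem (show v ∉ {v | ∀ i, v i ∈ s} from hv),
      Finset.prod_eq_zero (Finset.mem_univ i)]
    exact Set.indicator_of_notMem hi _

theorem toOuterMeasure_ne_top (p : PMF X) (s : Set X) : p.toOuterMeasure s ≠ ∞ := by
  rw [toOuterMeasure_apply]
  exact p.tsum_coe_indicator_ne_top s

theorem toOuterMeasure_eq_one_sub_compl (p : PMF X) (s : Set X) :
    p.toOuterMeasure s = 1 - p.toOuterMeasure sᶜ :=
  ENNReal.eq_sub_of_add_eq (p.toOuterMeasure_ne_top _) (p.toOuterMeasure_add_compl s)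

theorem toOuterMeasure_le_ofReal_exp_neg (p : PMF X) {s : Set X} {ε : ℝ} (hε : 0 ≤ ε)
    (hs : ENNReal.ofReal ε < p.toOuterMeasure sᶜ) :
    p.toOuterMeasure s ≤ ENNReal.ofReal (Real.exp (-ε)) :=
  calc p.toOuterMeasure s = 1 - p.toOuterMeasure sᶜ := p.toOuterMeasure_eq_one_sub_compl s
    _ ≤ 1 - ENNReal.ofReal ε := tsub_le_tsub_left hs.le 1
    _ = ENNReal.ofReal (1 - ε) := by rw [ENNReal.ofReal_sub 1 hε, ENNReal.ofReal_one]
    _ ≤ ENNReal.ofReal (Real.exp (-ε)) := by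
        gcongr; linarith [Real.add_one_le_exp (-ε)]

theorem one_sub_le_toReal_toOuterMeasure (p : PMF X) {s : Set X} {δ : ℝ} (hδ : 0 ≤ δ)
    (hs : p.toOuterMeasure sᶜ ≤ ENNReal.ofReal δ) :
    1 - δ ≤ (p.toOuterMeasure s).toReal := by
  have hsc : p.toOuterMeasure sᶜ ≤ 1 := le_add_self.trans (p.toOuterMeasure_add_compl s).le
  rw [p.toOuterMeasure_eq_one_sub_compl, ENNReal.toReal_sub_of_le hsc ENNReal.one_ne_top,
    ENNReal.toReal_one]
  linarith [ENNReal.toReal_le_of_le_ofReal hδ hs]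

variable {Y : Type*}

theorem iid_toOuterMeasure_consistent_le (D : PMF X) (k : ℕ) {f g : X → Y} {ε : ℝ}
    (hε : 0 ≤ ε) (hgf : ENNReal.ofReal ε < D.toOuterMeasure {x | g x ≠ f x}) :
    (D.iid k).toOuterMeasure {v | ∀ i, g (v i) = f (v i)}
      ≤ ENNReal.ofReal (Real.exp (-(ε * k))) :=
  calc (D.iid k).toOuterMeasure {v | ∀ i, g (v i) = f (v i)}
      = D.toOuterMeasure {x | g x = f x} ^ k :=
        D.iid_toOuterMeasure_forall_mem k {x | g x = f x}
    _ ≤ ENNReal.ofReal (Real.exp (-ε)) ^ k := by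
        gcongr; exact D.toOuterMeasure_le_ofReal_exp_neg hε hgf
    _ = ENNReal.ofReal (Real.exp (-(ε * k))) := by
        rw [← ENNReal.ofReal_pow (Real.exp_pos _).le, ← Real.exp_nat_mul]
        ring_nf

theorem iid_toOuterMeasure_exists_consistent_le (D : PMF X) (k : ℕ) (H : Finset (X → Y))
    (f : X → Y) {ε : ℝ} (hε : 0 ≤ ε)
    (hdist : ∀ g ∈ H, g ≠ f → ENNReal.ofReal ε < D.toOuterMeasure {x | g x ≠ f x}) :
    (D.iid k).toOuterMeasure {v | ∃ g ∈ H, g ≠ f ∧ ∀ i, g (v i) = f (v i)}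
      ≤ H.card * ENNReal.ofReal (Real.exp (-(ε * k))) := by
  classical
  have hunion : {v | ∃ g ∈ H, g ≠ f ∧ ∀ i, g (v i) = f (v i)}
      ⊆ ⋃ g ∈ H.erase f, {v : Fin k → X | ∀ i, g (v i) = f (v i)} := by
    rintro v ⟨g, hg, hgf, hcons⟩
    exact Set.mem_biUnion (Finset.mem_erase.mpr ⟨hgf, hg⟩) hcons
  calc _ ≤ ∑ g ∈ H.erase f, (D.iid k).toOuterMeasure {v | ∀ i, g (v i) = f (v i)} :=
        (measure_mono hunion).trans (measure_biUnion_finset_le _ _)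
    _ ≤ ∑ g ∈ H.erase f, ENNReal.ofReal (Real.exp (-(ε * k))) := by
        refine Finset.sum_le_sum fun g hg => ?_
        obtain ⟨hgf, hg⟩ := Finset.mem_erase.mp hg
        exact D.iid_toOuterMeasure_consistent_le k hε (hdist g hg hgf)
    _ ≤ H.card * ENNReal.ofReal (Real.exp (-(ε * k))) := by
        rw [Finset.sum_const, nsmul_eq_mul]
        gcongr
        exact H.erase_subset f

end PMF

theorem mul_exp_neg_le_of_log_add_log_le {n ε δ : ℝ} (k : ℕ) (hn : 0 < n) (hε : 0 < ε)
    (hδ : 0 < δ) (hk : (1 / ε) * (Real.log n + Real.log (1 / δ)) ≤ k) :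
    n * Real.exp (-(ε * k)) ≤ δ := by
  have hlog : Real.log (n / δ) ≤ ε * k := by
    rw [Real.log_div hn.ne' hδ.ne', sub_eq_add_neg, ← Real.log_inv, ← one_div]
    rwa [one_div_mul_eq_div, div_le_iff₀ hε, mul_comm] at hk
  rw [Real.log_le_iff_le_exp (div_pos hn hδ), div_le_iff₀ hδ] at hlog
  rw [Real.exp_neg, ← div_eq_mul_inv, div_le_iff₀ (Real.exp_pos _)]
  linarith

theorem distinguishable_class_identification_general {X : Type*} (D : PMF X)
    (H : Finset (X → X)) (ε₀ : ℝ) (hε₀ : 0 < ε₀)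
    (hdist : ∀ f ∈ H, ∀ g ∈ H, f ≠ g →
      ENNReal.ofReal ε₀ < D.toOuterMeasure {x | f x ≠ g x})
    (f : X → X) (hf : f ∈ H) (δ' : ℝ) (hδ'0 : 0 < δ')
    (k : ℕ) (hk : (1 / ε₀) * (Real.log H.card + Real.log (1 / δ')) ≤ (k : ℝ)) :
    1 - δ' ≤
      (∑' v : Fin k → X,
        Set.indicator {v : Fin k → X |
            ∀ g ∈ H, (∀ i, g (v i) = f (v i)) → g = f}
          (fun v => ∏ i, D (v i)) v).toReal := by
  have hcard : (0 : ℝ) < H.card := by exact_mod_cast Finset.card_pos.mpr ⟨f, hf⟩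
  have hbad : (D.iid k).toOuterMeasure {v | ∀ g ∈ H, (∀ i, g (v i) = f (v i)) → g = f}ᶜ
      ≤ ENNReal.ofReal δ' :=
    calc _ ≤ (D.iid k).toOuterMeasure {v | ∃ g ∈ H, g ≠ f ∧ ∀ i, g (v i) = f (v i)} := by
          refine measure_mono fun v hv => ?_
          simpa [and_comm] using hv
      _ ≤ H.card * ENNReal.ofReal (Real.exp (-(ε₀ * k))) :=
          D.iid_toOuterMeasure_exists_consistent_le k H f hε₀.le
            fun g hg hgf => hdist g hg f hf hgf
      _ ≤ ENNReal.ofReal δ' := by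
          rw [← ENNReal.ofReal_natCast, ← ENNReal.ofReal_mul hcard.le]
          exact ENNReal.ofReal_le_ofReal (mul_exp_neg_le_of_log_add_log_le k hcard hε₀ hδ'0 hk)
  have hgood := (D.iid k).one_sub_le_toReal_toOuterMeasure hδ'0.le hbad
  rwa [PMF.toOuterMeasure_apply] at hgood

/-- If the finite class `H` is `ε₀`-distinguishable under `D` (any two
distinct members differ with probability more than `ε₀`), `f ∈ H`, and
`k ≥ (1/ε₀)·(ln|H| + ln(1/δ'))`, then with probability at least `1 − δ'` over `k`
i.i.d. draws from `D`, the only `g ∈ H` consistent with the sample labeled by `f`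
is `f` itself. -/
theorem distinguishable_class_identification {X : Type*} (D : PMF X)
    (H : Finset (X → X)) (hH : H.Nonempty) (ε₀ : ℝ) (hε₀ : 0 < ε₀)
    (hdist : ∀ f ∈ H, ∀ g ∈ H, f ≠ g →
      ENNReal.ofReal ε₀ < D.toOuterMeasure {x | f x ≠ g x})
    (f : X → X) (hf : f ∈ H) (δ' : ℝ) (hδ'0 : 0 < δ') (hδ'1 : δ' < 1)
    (k : ℕ) (hk : (1 / ε₀) * (Real.log H.card + Real.log (1 / δ')) ≤ (k : ℝ)) :
    1 - δ' ≤
      (∑' v : Fin k → X,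
        Set.indicator {v : Fin k → X |
            ∀ g ∈ H, (∀ i, g (v i) = f (v i)) → g = f}
          (fun v => ∏ i, D (v i)) v).toReal :=
  distinguishable_class_identification_general D H ε₀ hε₀ hdist f hf δ' hδ'0 k hk
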